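/- arXiv:1903.09362 — 4 statements merged into one kernel-verified Lean document; each statement's English description precedes it below -/
import Mathlib

section
/- Let p be a prime and y ∈ ℚ_p^n. Consider the set E ⊂ ℝ² of pairs (|q₀ + q·y|_p · ‖(q₀,q)‖_∞, ‖q‖_p · ‖(q₀,q)‖_∞) where (q₀,q) ranges over ℤ[1/p]^{n+1}. If (x_k, z_k) ∈ E is a sequence with (z_k) bounded and x_k → 0, then x_k = 0 for all but finitely many k. -/
open scoped BigOperators

/-- `x` lies in `ℤ[1/p] ⊂ ℚ`. -/
def ZInvP (p : ℕ) (x : ℚ) : Prop := ∃ (a : ℤ) (k : ℕ), x = a / (p : ℚ) ^ k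

/-- `‖q‖_p`: max of `p`-adic absolute values of the coordinates of a rational vector. -/
noncomputable def pnorm (p : ℕ) {m : ℕ} (q : Fin m → ℚ) : ℝ :=
  ⨆ i, ((padicNorm p (q i) : ℚ) : ℝ)

/-- `‖q‖_∞`: max of archimedean absolute values of the coordinates of a rational vector. -/
noncomputable def supnorm {m : ℕ} (q : Fin m → ℚ) : ℝ :=
  ⨆ i, |((q i : ℚ) : ℝ)|

/-- `‖v‖_p` for a vector of `p`-adic numbers. -/
noncomputable def pnormP {p : ℕ} [Fact p.Prime] {m : ℕ} (v : Fin m → ℚ_[p]) : ℝ :=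
  ⨆ i, ‖v i‖

/-!
Both coordinates of a point of `E` are unchanged when `(q₀, q)` is multiplied by a power of `p`,
so for `q ≠ 0` we may normalise to `‖q‖_p = 1`. Then `q` is integral, and `z ≤ M` becomes
`‖(q₀, q)‖_∞ ≤ M`. If `|q₀|_p` exceeds a bound `C` for `|q·y|_p`, then `|q₀ + q·y|_p = |q₀|_p`
and the product formula `|q₀|_p |q₀| ≥ 1` on `ℤ[1/p]` gives `x ≥ 1`; otherwise `p^c q₀` is an
integer for a fixed `c`, leaving finitely many `(q₀, q)`. So the values `x < 1` with `z ≤ M` form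
a finite set, and a sequence tending to `0` eventually avoids its nonzero members.
-/

theorem zInvP_zpow {p : ℕ} (m : ℤ) : ZInvP p ((p : ℚ) ^ m) := by
  rcases Int.eq_nat_or_neg m with ⟨k, rfl | rfl⟩
  · exact ⟨p ^ k, 0, by simp⟩
  · exact ⟨1, k, by simp⟩

theorem zInvP_padicNorm {p : ℕ} (r : ℚ) : ZInvP p (padicNorm p r) := by
  rcases eq_or_ne r 0 with rfl | hr
  · exact ⟨0, 0, by simp⟩
  · rw [padicNorm.eq_zpow_of_nonzero hr]
    exact zInvP_zpow _

theorem padicNorm_padicNorm {p : ℕ} [Fact p.Prime] {r : ℚ} (hr : r ≠ 0) :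
    padicNorm p (padicNorm p r) = (padicNorm p r)⁻¹ := by
  have hp : (p : ℚ) ≠ 0 := Nat.cast_ne_zero.2 (Fact.out : p.Prime).ne_zero
  have hp1 : padicValRat p p = 1 := padicValRat.self (Fact.out : p.Prime).one_lt
  rw [padicNorm.eq_zpow_of_nonzero hr, padicNorm.eq_zpow_of_nonzero (zpow_ne_zero _ hp),
    padicValRat.zpow, hp1, ← zpow_neg]
  simp

namespace ZInvP

variable {p : ℕ}

theorem mul {r s : ℚ} (hr : ZInvP p r) (hs : ZInvP p s) : ZInvP p (r * s) := by
  obtain ⟨a, k, rfl⟩ := hr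
  obtain ⟨b, l, rfl⟩ := hs
  exact ⟨a * b, k + l, by push_cast; ring⟩

variable [Fact p.Prime]

theorem exists_eq_intCast_of_padicNorm_le_one {r : ℚ} (hr : ZInvP p r)
    (h : padicNorm p r ≤ 1) : ∃ a : ℤ, r = a := by
  obtain ⟨b, k, rfl⟩ := hr
  have hpk : (p : ℚ) ^ k ≠ 0 := pow_ne_zero _ (Nat.cast_ne_zero.2 (Fact.out : p.Prime).ne_zero)
  have hdvd : ((p ^ k : ℕ) : ℤ) ∣ b := by
    rw [padicNorm.dvd_iff_norm_le, zpow_neg, zpow_natCast, ← div_le_one₀ (by positivity)]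
    simpa [padicNorm.div, IsAbsoluteValue.abv_pow (padicNorm p), padicNorm.padicNorm_p_of_prime]
      using h
  obtain ⟨a, rfl⟩ := hdvd
  exact ⟨a, by push_cast; field_simp⟩

theorem one_le_norm_mul_abs {r : ℚ} (hr : ZInvP p r) (h0 : r ≠ 0) :
    1 ≤ ‖(r : ℚ_[p])‖ * |(r : ℝ)| := by
  -- `r * ‖r‖_p` is a `p`-adic unit in `ℤ[1/p]`, hence a nonzero integer.
  have hunit : padicNorm p (r * padicNorm p r) = 1 := by
    rw [padicNorm.mul, padicNorm_padicNorm h0, mul_inv_cancel₀ (padicNorm.nonzero h0)]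
  obtain ⟨a, ha⟩ :=
    (hr.mul (zInvP_padicNorm r)).exists_eq_intCast_of_padicNorm_le_one hunit.le
  have ha0 : a ≠ 0 := by
    rintro rfl
    simp [ha] at hunit
  have key : (1 : ℚ) ≤ padicNorm p r * |r| := by
    calc (1 : ℚ) ≤ |(a : ℚ)| := by exact_mod_cast Int.one_le_abs ha0
      _ = padicNorm p r * |r| := by
        rw [← ha, abs_mul, abs_of_nonneg (padicNorm.nonneg r), mul_comm]
  rw [Padic.eq_padicNorm]
  exact_mod_cast key

end ZInvP

def boundedZInvP (p : ℕ) [Fact p.Prime] (C M : ℝ) : Set ℚ :=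
  {r | ZInvP p r ∧ ‖(r : ℚ_[p])‖ ≤ C ∧ |(r : ℝ)| ≤ M}

theorem finite_boundedZInvP {p : ℕ} [Fact p.Prime] (C M : ℝ) :
    (boundedZInvP p C M).Finite := by
  have hp : (1 : ℝ) < p := by exact_mod_cast (Fact.out : p.Prime).one_lt
  obtain ⟨c, hc⟩ := pow_unbounded_of_one_lt C hp
  refine ((Set.finite_Icc (-⌈M * p ^ c⌉) ⌈M * p ^ c⌉).image
    fun a : ℤ => (a : ℚ) / (p : ℚ) ^ c).subset ?_
  rintro r ⟨hr, hrC, hrM⟩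
  have hpc : (0 : ℝ) < (p : ℝ) ^ c := by positivity
  have hnorm : padicNorm p (r * (p : ℚ) ^ c) ≤ 1 := by
    have : ‖((r * (p : ℚ) ^ c : ℚ) : ℚ_[p])‖ ≤ 1 := by
      rw [Rat.cast_mul, norm_mul, Rat.cast_pow, Rat.cast_natCast, Padic.norm_p_pow, zpow_neg,
        zpow_natCast, ← div_eq_mul_inv, div_le_one hpc]
      exact hrC.trans hc.le
    rw [Padic.eq_padicNorm] at this
    exact_mod_cast this
  obtain ⟨a, ha⟩ := (hr.mul (zInvP_zpow c)).exists_eq_intCast_of_padicNorm_le_one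
    (by simpa using hnorm)
  rw [zpow_natCast] at ha
  refine ⟨a, ?_, ?_⟩
  · have habs : |(a : ℝ)| ≤ M * p ^ c := by
      have : (a : ℝ) = r * p ^ c := by exact_mod_cast ha.symm
      rw [this, abs_mul, abs_of_pos hpc]
      exact mul_le_mul_of_nonneg_right hrM hpc.le
    rw [Set.mem_Icc, ← abs_le]
    exact_mod_cast habs.trans (Int.le_ceil _)
  · simp only [← ha]
    exact mul_div_cancel_right₀ r (pow_ne_zero _ (Nat.cast_ne_zero.2 (Fact.out : p.Prime).ne_zero))

section Norms

variable {m : ℕ}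

theorem abs_le_supnorm (v : Fin m → ℚ) (i : Fin m) : |(v i : ℝ)| ≤ supnorm v :=
  le_ciSup (f := fun i => |(v i : ℝ)|) (Set.finite_range _).bddAbove i

theorem supnorm_smul (c : ℚ) (v : Fin m → ℚ) : supnorm (c • v) = |(c : ℝ)| * supnorm v := by
  simp only [supnorm, Real.mul_iSup_of_nonneg (abs_nonneg _), Pi.smul_apply, smul_eq_mul,
    Rat.cast_mul, abs_mul]

variable {p : ℕ} [Fact p.Prime]

theorem norm_le_pnorm (q : Fin m → ℚ) (i : Fin m) : ‖(q i : ℚ_[p])‖ ≤ pnorm p q := by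
  rw [Padic.eq_padicNorm]
  exact le_ciSup (f := fun i => ((padicNorm p (q i) : ℚ) : ℝ)) (Set.finite_range _).bddAbove i

theorem pnorm_smul (c : ℚ) (q : Fin m → ℚ) : pnorm p (c • q) = ‖(c : ℚ_[p])‖ * pnorm p q := by
  simp only [pnorm, Padic.eq_padicNorm,
    Real.mul_iSup_of_nonneg (Rat.cast_nonneg.2 (padicNorm.nonneg c)), Pi.smul_apply, smul_eq_mul,
    padicNorm.mul, Rat.cast_mul]

theorem exists_pnorm_smul_eq_one {q : Fin m → ℚ} (hq : q ≠ 0) :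
    ∃ c : ℚ, ZInvP p c ∧ ‖(c : ℚ_[p])‖ * |(c : ℝ)| = 1 ∧ pnorm p (c • q) = 1 := by
  obtain ⟨i, hi⟩ := Function.ne_iff.1 hq
  have : Nonempty (Fin m) := ⟨i⟩
  obtain ⟨j, hj⟩ := exists_eq_ciSup_of_finite (f := fun i => ((padicNorm p (q i) : ℚ) : ℝ))
  have hpnorm : pnorm p q = ‖(q j : ℚ_[p])‖ := by rw [Padic.eq_padicNorm, pnorm, hj]
  have hqj : q j ≠ 0 := by
    intro h
    have hle := (norm_le_pnorm (p := p) q i).trans_eq hpnorm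
    rw [h, Rat.cast_zero, norm_zero, norm_le_zero_iff] at hle
    exact hi (by exact_mod_cast hle)
  -- The scaling factor is `‖q‖_p` itself, a power of `p`.
  set t := padicNorm p (q j) with ht
  have htR : (0 : ℝ) < t := by
    exact_mod_cast lt_of_le_of_ne (padicNorm.nonneg _) (padicNorm.nonzero hqj).symm
  have hnorm_t : ‖(t : ℚ_[p])‖ = (t : ℝ)⁻¹ := by
    rw [Padic.eq_padicNorm, ht, padicNorm_padicNorm hqj, Rat.cast_inv]
  refine ⟨t, zInvP_padicNorm _, ?_, ?_⟩
  · rw [hnorm_t, abs_of_pos htR, inv_mul_cancel₀ htR.ne']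
  · rw [pnorm_smul, hpnorm, hnorm_t, Padic.eq_padicNorm, inv_mul_cancel₀ htR.ne']

end Norms

section Defect

variable {p : ℕ} [Fact p.Prime] {n : ℕ}

/-- The first coordinate `|q₀ + q·y|_p ‖(q₀, q)‖_∞` of a point of `E`. -/
noncomputable def defect (y : Fin n → ℚ_[p]) (q0 : ℚ) (q : Fin n → ℚ) : ℝ :=
  ‖(q0 : ℚ_[p]) + ∑ i, (q i : ℚ_[p]) * y i‖ * supnorm (Fin.cons q0 q)

theorem cons_mul_smul (c q0 : ℚ) (q : Fin n → ℚ) :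
    (Fin.cons (c * q0) (c • q) : Fin (n + 1) → ℚ) = c • Fin.cons q0 q :=
  (Matrix.smul_cons c q0 q).symm

theorem defect_smul (y : Fin n → ℚ_[p]) (c q0 : ℚ) (q : Fin n → ℚ) :
    defect y (c * q0) (c • q) = ‖(c : ℚ_[p])‖ * |(c : ℝ)| * defect y q0 q := by
  have hform : ((c * q0 : ℚ) : ℚ_[p]) + ∑ i, ((c • q) i : ℚ_[p]) * y i
      = c * ((q0 : ℚ_[p]) + ∑ i, (q i : ℚ_[p]) * y i) := by
    simp only [Pi.smul_apply, smul_eq_mul, Rat.cast_mul, mul_add, Finset.mul_sum, mul_assoc]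
  rw [defect, defect, hform, norm_mul, cons_mul_smul, supnorm_smul]
  ring

theorem one_le_defect_of_norm_sum_lt (y : Fin n → ℚ_[p]) {q0 : ℚ} (q : Fin n → ℚ)
    (hq0 : ZInvP p q0) (h : ‖∑ i, (q i : ℚ_[p]) * y i‖ < ‖(q0 : ℚ_[p])‖) :
    1 ≤ defect y q0 q := by
  have hq0_ne : q0 ≠ 0 := by
    rintro rfl
    simp only [Rat.cast_zero, norm_zero] at h
    exact (norm_nonneg _).not_gt h
  have hnorm : ‖(q0 : ℚ_[p]) + ∑ i, (q i : ℚ_[p]) * y i‖ = ‖(q0 : ℚ_[p])‖ := by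
    rw [Padic.add_eq_max_of_ne h.ne', max_eq_left h.le]
  calc 1 ≤ ‖(q0 : ℚ_[p])‖ * |(q0 : ℝ)| := hq0.one_le_norm_mul_abs hq0_ne
    _ ≤ defect y q0 q := by
      rw [defect, hnorm]
      exact mul_le_mul_of_nonneg_left (by simpa using abs_le_supnorm (Fin.cons q0 q) 0)
        (norm_nonneg _)

theorem one_le_defect_or_mem_of_pnorm_eq_one {y : Fin n → ℚ_[p]} {C M : ℝ} (hC : 1 ≤ C)
    (hyC : ∀ i, ‖y i‖ ≤ C) {q0 : ℚ} {q : Fin n → ℚ} (hq0 : ZInvP p q0)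
    (hq : ∀ i, ZInvP p (q i)) (hpq : pnorm p q = 1) (hM : supnorm (Fin.cons q0 q) ≤ M) :
    1 ≤ defect y q0 q ∨ q0 ∈ boundedZInvP p C M ∧ ∀ i, q i ∈ boundedZInvP p C M := by
  have hqi : ∀ i, ‖(q i : ℚ_[p])‖ ≤ 1 := fun i => hpq ▸ norm_le_pnorm (p := p) q i
  have hsum : ‖∑ i, (q i : ℚ_[p]) * y i‖ ≤ C :=
    IsUltrametricDist.norm_sum_le_of_forall_le_of_nonneg (by linarith) fun i _ => by
      rw [norm_mul]
      simpa using mul_le_mul (hqi i) (hyC i) (norm_nonneg _) zero_le_one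
  by_cases hq0C : ‖(q0 : ℚ_[p])‖ ≤ C
  · right
    exact ⟨⟨hq0, hq0C, by simpa using (abs_le_supnorm (Fin.cons q0 q) 0).trans hM⟩,
      fun i => ⟨hq i, (hqi i).trans hC,
        by simpa using (abs_le_supnorm (Fin.cons q0 q) i.succ).trans hM⟩⟩
  · exact .inl (one_le_defect_of_norm_sum_lt y q hq0 (hsum.trans_lt (not_le.1 hq0C)))

theorem finite_setOf_defect_lt_one (y : Fin n → ℚ_[p]) (M : ℝ) :
    {d | d < 1 ∧ ∃ (q0 : ℚ) (q : Fin n → ℚ), ZInvP p q0 ∧ (∀ i, ZInvP p (q i)) ∧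
      pnorm p q * supnorm (Fin.cons q0 q) ≤ M ∧ defect y q0 q = d}.Finite := by
  set C := 1 + ∑ i, ‖y i‖
  have hC : 1 ≤ C := le_add_of_nonneg_right (Finset.sum_nonneg fun i _ => norm_nonneg _)
  have hyC : ∀ i, ‖y i‖ ≤ C := fun i =>
    (Finset.single_le_sum (fun i _ => norm_nonneg (y i)) (Finset.mem_univ i)).trans
      (le_add_of_nonneg_left zero_le_one)
  have hbox := finite_boundedZInvP (p := p) C M
  refine (((hbox.prod (Set.Finite.pi' fun _ => hbox)).image
    fun v : ℚ × (Fin n → ℚ) => defect y v.1 v.2).insert 0).subset ?_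
  rintro _ ⟨hd, q0, q, hq0, hq, hM, rfl⟩
  obtain rfl | hq_ne := eq_or_ne q 0
  · obtain rfl | hq0_ne := eq_or_ne q0 0
    · exact .inl (by simp [defect])
    · exact absurd hd (one_le_defect_of_norm_sum_lt y 0 hq0
        (by simpa using (padicNorm.nonneg (p := p) q0).lt_of_ne' (padicNorm.nonzero hq0_ne))).not_gt
  obtain ⟨c, hc, hc_one, hpc⟩ := exists_pnorm_smul_eq_one (p := p) hq_ne
  have hdefect : defect y (c * q0) (c • q) = defect y q0 q := by
    rw [defect_smul, hc_one, one_mul]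
  have hM' : supnorm (Fin.cons (c * q0) (c • q)) ≤ M := by
    calc supnorm (Fin.cons (c * q0) (c • q))
        = pnorm p (c • q) * supnorm (Fin.cons (c * q0) (c • q)) := by rw [hpc, one_mul]
      _ = ‖(c : ℚ_[p])‖ * |(c : ℝ)| * (pnorm p q * supnorm (Fin.cons q0 q)) := by
        rw [pnorm_smul, cons_mul_smul, supnorm_smul]
        ring
      _ ≤ M := by rwa [hc_one, one_mul]
  rcases one_le_defect_or_mem_of_pnorm_eq_one (q := c • q) hC hyC (hc.mul hq0)
    (fun i => hc.mul (hq i)) hpc hM' with h1 | hmem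
  · linarith
  · exact .inr ⟨(c * q0, c • q), hmem, hdefect⟩

end Defect

theorem stmt_0 (p : ℕ) [Fact p.Prime] (n : ℕ) (y : Fin n → ℚ_[p])
    (x z : ℕ → ℝ)
    (hE : ∀ k, ∃ (q0 : ℚ) (q : Fin n → ℚ), ZInvP p q0 ∧ (∀ i, ZInvP p (q i)) ∧
      x k = ‖((q0 : ℚ_[p]) + ∑ i, (q i : ℚ_[p]) * y i)‖ * supnorm (Fin.cons q0 q) ∧
      z k = pnorm p q * supnorm (Fin.cons q0 q))
    (hz : ∃ M : ℝ, ∀ k, |z k| ≤ M)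
    (hx : Filter.Tendsto x Filter.atTop (nhds 0)) :
    ∀ᶠ k in Filter.atTop, x k = 0 := by
  obtain ⟨M, hM⟩ := hz
  have havoid := (Filter.eventually_all_finite (p := fun d k => x k ≠ d)
    ((finite_setOf_defect_lt_one y M).sdiff (t := {0}))).2
    fun d hd => hx.eventually_ne (Ne.symm hd.2)
  filter_upwards [havoid, hx.eventually_lt_const one_pos] with k hk hk1
  obtain ⟨q0, q, hq0, hq, hxk, hzk⟩ := hE k
  by_contra hxk0
  exact hk (x k) ⟨⟨hk1, q0, q, hq0, hq, hzk ▸ (le_abs_self _).trans (hM k), hxk.symm⟩, hxk0⟩ rfl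
end

section
/- Let v > 1 and y ∈ ℚ_p^n. If there exist infinitely many integer vectors (q₀,q) ∈ ℤ^{n+1} with |q₀ + q·y|_p < ‖(q₀,q)‖_∞^{-v}, then the quantities ‖q‖_p · ‖(q₀,q)‖_∞ arising from such solutions are unbounded, and each such solution satisfies |q₀ + q·y|_p < (‖q‖_p · ‖(q₀,q)‖_∞)^{-(v-1)} · ‖(q₀,q)‖_∞^{-1}. -/
/-!
Write `L(q₀, q) = q₀ + q·y`. The second claim only needs `‖q‖_p ≤ 1`. For the first, suppose
`‖q‖_p · ‖(q₀, q)‖_∞ ≤ M` on the solution set. If `‖q‖_p = p⁻ᵏ` then `pᵏ ∣ q`, and the ultrametric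
inequality applied to `q₀ = L(q₀, q) - q·y` gives `|q₀|_p ≤ pᶜ p⁻ᵏ`, where `pᶜ ≥ max |yᵢ|_p`.
Hence `pᶜ (q₀, q) = pᵏ r` with `‖r‖_∞ ≤ pᶜ M` and `|L(r)|_p < ‖(q₀, q)‖_∞ ^ (1 - v)`. There are
solutions of arbitrarily large height while `r` ranges over a finite set, so `L(r) = 0` for some `r`
with nonzero `q`-part. The multiples `(pN + 1) r` are then solutions with the same `‖q‖_p` and
height growing linearly in `N`.
-/

open scoped BigOperators

namespace PadicLinearForm

variable {p : ℕ} [hp : Fact p.Prime] {n : ℕ}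

noncomputable def linForm (y : Fin n → ℚ_[p]) (qq : ℤ × (Fin n → ℤ)) : ℚ_[p] :=
  qq.1 + ∑ i, (qq.2 i : ℚ_[p]) * y i

noncomputable def height (qq : ℤ × (Fin n → ℤ)) : ℝ :=
  supnorm (Fin.cons (qq.1 : ℚ) fun i => (qq.2 i : ℚ))

noncomputable def pHeight (p : ℕ) (qq : ℤ × (Fin n → ℤ)) : ℝ :=
  pnorm p fun i => (qq.2 i : ℚ)

def solutions (y : Fin n → ℚ_[p]) (v : ℝ) : Set (ℤ × (Fin n → ℤ)) :=
  {qq | ‖linForm y qq‖ < height qq ^ (-v)}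

lemma linForm_smul (y : Fin n → ℚ_[p]) (m : ℤ) (qq : ℤ × (Fin n → ℤ)) :
    linForm y (m • qq) = m * linForm y qq := by
  simp only [linForm, Prod.smul_fst, Prod.smul_snd, Pi.smul_apply, smul_eq_mul, Int.cast_mul,
    mul_add, Finset.mul_sum, mul_assoc]

lemma height_le_iff {qq : ℤ × (Fin n → ℤ)} {R : ℝ} :
    height qq ≤ R ↔ |(qq.1 : ℝ)| ≤ R ∧ ∀ i, |(qq.2 i : ℝ)| ≤ R := by
  simp only [height, supnorm, ciSup_le_iff (Set.finite_range _).bddAbove, Fin.forall_fin_succ,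
    Fin.cons_zero, Fin.cons_succ, Rat.cast_intCast]

lemma abs_fst_le_height (qq : ℤ × (Fin n → ℤ)) : |(qq.1 : ℝ)| ≤ height qq :=
  (height_le_iff.1 le_rfl).1

lemma abs_snd_le_height (qq : ℤ × (Fin n → ℤ)) (i : Fin n) : |(qq.2 i : ℝ)| ≤ height qq :=
  (height_le_iff.1 le_rfl).2 i

lemma height_smul (m : ℤ) (qq : ℤ × (Fin n → ℤ)) : height (m • qq) = |(m : ℝ)| * height qq := by
  simp only [height, supnorm]
  rw [Real.mul_iSup_of_nonneg (abs_nonneg _)]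
  congr 1
  ext j
  cases j using Fin.cases <;> simp [abs_mul]

lemma one_le_height_of_snd_ne_zero {qq : ℤ × (Fin n → ℤ)} (h : qq.2 ≠ 0) : 1 ≤ height qq := by
  obtain ⟨i, hi⟩ := Function.ne_iff.1 h
  exact (mod_cast Int.one_le_abs hi : (1 : ℝ) ≤ |(qq.2 i : ℝ)|).trans (abs_snd_le_height qq i)

lemma finite_setOf_height_le (R : ℝ) : {qq : ℤ × (Fin n → ℤ) | height qq ≤ R}.Finite := by
  have hbound : ∀ a : ℤ, |(a : ℝ)| ≤ R → -⌈R⌉ ≤ a ∧ a ≤ ⌈R⌉ := fun a ha =>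
    abs_le.1 (Int.cast_le.1 ((mod_cast ha : ((|a| : ℤ) : ℝ) ≤ R).trans (Int.le_ceil R)))
  refine ((Set.finite_Icc (-⌈R⌉) ⌈R⌉).prod (Set.finite_Icc (fun _ => -⌈R⌉) fun _ => ⌈R⌉)).subset
    fun qq hqq => ?_
  obtain ⟨h1, h2⟩ := height_le_iff.1 hqq
  exact ⟨hbound _ h1, fun i => (hbound _ (h2 i)).1, fun i => (hbound _ (h2 i)).2⟩

lemma norm_intCast_eq_inv_pow {a : ℤ} (ha : a ≠ 0) :
    ‖(a : ℚ_[p])‖ = ((p : ℝ) ^ padicValInt p a)⁻¹ := by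
  rw [Padic.norm_eq_zpow_neg_valuation (mod_cast ha), Padic.valuation_intCast, zpow_neg,
    zpow_natCast]

lemma inv_abs_le_norm_intCast {a : ℤ} (ha : a ≠ 0) : |(a : ℝ)|⁻¹ ≤ ‖(a : ℚ_[p])‖ := by
  rw [norm_intCast_eq_inv_pow ha]
  have hdvd := Int.le_of_dvd (abs_pos.2 ha) ((dvd_abs _ _).2 (padicValInt_dvd (p := p) a))
  exact inv_anti₀ (pow_pos (mod_cast hp.out.pos) _) (mod_cast hdvd)

lemma pHeight_eq (qq : ℤ × (Fin n → ℤ)) : pHeight p qq = ⨆ i, ‖(qq.2 i : ℚ_[p])‖ := by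
  simp only [pHeight, pnorm, ← Padic.eq_padicNorm, Rat.cast_intCast]

lemma norm_le_pHeight (qq : ℤ × (Fin n → ℤ)) (i : Fin n) : ‖(qq.2 i : ℚ_[p])‖ ≤ pHeight p qq :=
  pHeight_eq (p := p) qq ▸
    le_ciSup (f := fun i => ‖(qq.2 i : ℚ_[p])‖) (Set.finite_range _).bddAbove i

lemma pHeight_le_one (qq : ℤ × (Fin n → ℤ)) : pHeight p qq ≤ 1 :=
  pHeight_eq (p := p) qq ▸ Real.iSup_le (fun _ => Padic.norm_int_le_one _) zero_le_one

lemma pHeight_smul (m : ℤ) (qq : ℤ × (Fin n → ℤ)) :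
    pHeight p (m • qq) = ‖(m : ℚ_[p])‖ * pHeight p qq := by
  simp only [pHeight_eq, Real.mul_iSup_of_nonneg (norm_nonneg _), Prod.smul_snd, Pi.smul_apply,
    smul_eq_mul, Int.cast_mul, norm_mul]

lemma exists_pHeight_eq_inv_pow {qq : ℤ × (Fin n → ℤ)} (h : qq.2 ≠ 0) :
    ∃ k : ℕ, pHeight p qq = ((p : ℝ) ^ k)⁻¹ := by
  obtain ⟨i, hi⟩ := Function.ne_iff.1 h
  have : Nonempty (Fin n) := ⟨i⟩
  obtain ⟨j, hj⟩ := exists_eq_ciSup_of_finite (f := fun i => ‖(qq.2 i : ℚ_[p])‖)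
  have hj0 : qq.2 j ≠ 0 := by
    intro hj0
    have hpos : 0 < ‖(qq.2 i : ℚ_[p])‖ := norm_pos_iff.2 (mod_cast hi)
    have := norm_le_pHeight (p := p) qq i
    rw [pHeight_eq, ← hj, hj0, Int.cast_zero, norm_zero] at this
    linarith
  exact ⟨padicValInt p (qq.2 j), by rw [pHeight_eq, ← hj, norm_intCast_eq_inv_pow hj0]⟩

lemma pHeight_pos {qq : ℤ × (Fin n → ℤ)} (h : qq.2 ≠ 0) : 0 < pHeight p qq := by
  obtain ⟨k, hk⟩ := exists_pHeight_eq_inv_pow (p := p) h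
  rw [hk]
  exact inv_pos.2 (pow_pos (mod_cast hp.out.pos) _)

lemma pow_dvd_of_pHeight_le {qq : ℤ × (Fin n → ℤ)} {k : ℕ}
    (h : pHeight p qq ≤ ((p : ℝ) ^ k)⁻¹) (i : Fin n) : (p : ℤ) ^ k ∣ qq.2 i := by
  rw [← Padic.norm_int_le_pow_iff_dvd (p := p), zpow_neg, zpow_natCast]
  exact (norm_le_pHeight qq i).trans h

lemma one_le_pHeight_mul_height {qq : ℤ × (Fin n → ℤ)} (h : qq.2 ≠ 0) :
    1 ≤ pHeight p qq * height qq := by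
  obtain ⟨i, hi⟩ := Function.ne_iff.1 h
  have habs : 0 < |(qq.2 i : ℝ)| := abs_pos.2 (mod_cast hi)
  calc 1 ≤ ‖(qq.2 i : ℚ_[p])‖ * |(qq.2 i : ℝ)| :=
        (inv_le_iff_one_le_mul₀ habs).1 (inv_abs_le_norm_intCast hi)
    _ ≤ pHeight p qq * height qq :=
        mul_le_mul (norm_le_pHeight qq i) (abs_snd_le_height qq i) habs.le
          ((norm_nonneg _).trans (norm_le_pHeight qq i))

lemma norm_intCast_p_pow (k : ℕ) : ‖(((p : ℤ) ^ k : ℤ) : ℚ_[p])‖ = ((p : ℝ) ^ k)⁻¹ := by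
  rw [Int.cast_pow, Int.cast_natCast, Padic.norm_p_pow, zpow_neg, zpow_natCast]

lemma exists_eq_smul_of_dvd {d : ℤ} {qq : ℤ × (Fin n → ℤ)} (h₁ : d ∣ qq.1)
    (h₂ : ∀ i, d ∣ qq.2 i) : ∃ r : ℤ × (Fin n → ℤ), qq = d • r := by
  obtain ⟨a, ha⟩ := h₁
  choose b hb using h₂
  exact ⟨(a, b), Prod.ext ha (funext hb)⟩

section Solutions

variable {y : Fin n → ℚ_[p]} {v : ℝ} {qq : ℤ × (Fin n → ℤ)}

lemma snd_ne_zero_of_mem_solutions (hv : 1 ≤ v) (h : qq ∈ solutions y v) : qq.2 ≠ 0 := by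
  intro h2
  have hL : linForm y qq = qq.1 := by simp [linForm, h2]
  have hH : height qq = |(qq.1 : ℝ)| :=
    le_antisymm (height_le_iff.2 ⟨le_rfl, fun i => by simp [h2]⟩) (abs_fst_le_height qq)
  have h' : ‖(qq.1 : ℚ_[p])‖ < |(qq.1 : ℝ)| ^ (-v) := by rw [← hL, ← hH]; exact h
  rcases eq_or_ne qq.1 0 with h1 | h1
  · rw [h1] at h'
    simp [Real.zero_rpow (show -v ≠ 0 by linarith)] at h'
  · have h1' : 1 ≤ |(qq.1 : ℝ)| := mod_cast Int.one_le_abs h1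
    refine (inv_abs_le_norm_intCast h1).not_gt (h'.trans_le ?_)
    rw [← Real.rpow_neg_one]
    exact Real.rpow_le_rpow_of_exponent_le h1' (by linarith)

lemma norm_linForm_lt_of_mem_solutions (hv : 1 ≤ v) (h : qq ∈ solutions y v) :
    ‖linForm y qq‖ < (pHeight p qq * height qq) ^ (-(v - 1)) * (height qq)⁻¹ := by
  have hq := snd_ne_zero_of_mem_solutions hv h
  have hH : 0 < height qq := one_pos.trans_le (one_le_height_of_snd_ne_zero hq)
  calc ‖linForm y qq‖ < height qq ^ (-v) := h
    _ = height qq ^ (-(v - 1)) * (height qq)⁻¹ := by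
        rw [← Real.rpow_neg_one, ← Real.rpow_add hH]; ring_nf
    _ ≤ (pHeight p qq * height qq) ^ (-(v - 1)) * (height qq)⁻¹ := by
        gcongr ?_ * _
        exact Real.rpow_le_rpow_of_nonpos (mul_pos (pHeight_pos hq) hH)
          (mul_le_of_le_one_left hH.le (pHeight_le_one qq)) (by linarith)

lemma norm_linForm_le_pHeight (hv : 1 ≤ v) (h : qq ∈ solutions y v) :
    ‖linForm y qq‖ ≤ pHeight p qq := by
  have hq := snd_ne_zero_of_mem_solutions hv h
  have hH : 0 < height qq := one_pos.trans_le (one_le_height_of_snd_ne_zero hq)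
  calc ‖linForm y qq‖ ≤ height qq ^ (-1 : ℝ) := h.le.trans
        (Real.rpow_le_rpow_of_exponent_le (one_le_height_of_snd_ne_zero hq) (by linarith))
    _ ≤ pHeight p qq := by
        rw [Real.rpow_neg_one, inv_le_iff_one_le_mul₀ hH]
        exact one_le_pHeight_mul_height (p := p) hq

lemma norm_fst_le_of_mem_solutions (hv : 1 ≤ v) {C : ℕ} (hC : ∀ i, ‖y i‖ ≤ (p : ℝ) ^ C)
    (h : qq ∈ solutions y v) : ‖(qq.1 : ℚ_[p])‖ ≤ (p : ℝ) ^ C * pHeight p qq := by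
  have hP : 0 ≤ pHeight p qq := (pHeight_pos (snd_ne_zero_of_mem_solutions hv h)).le
  have hpC : (1 : ℝ) ≤ (p : ℝ) ^ C := one_le_pow₀ (mod_cast hp.out.one_le)
  have hsum : ‖∑ i, (qq.2 i : ℚ_[p]) * y i‖ ≤ (p : ℝ) ^ C * pHeight p qq :=
    IsUltrametricDist.norm_sum_le_of_forall_le_of_nonneg (by positivity) fun i _ => by
      rw [norm_mul, mul_comm]
      exact mul_le_mul (hC i) (norm_le_pHeight qq i) (norm_nonneg _) (by positivity)
  have hfst : (qq.1 : ℚ_[p]) = linForm y qq + -∑ i, (qq.2 i : ℚ_[p]) * y i := by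
    simp [linForm]
  rw [hfst]
  refine (IsUltrametricDist.norm_add_le_max _ _).trans (max_le ?_ (by rwa [norm_neg]))
  exact (norm_linForm_le_pHeight hv h).trans (le_mul_of_one_le_left hP hpC)

lemma exists_pow_smul_eq_pow_smul (hv : 1 ≤ v) {C k : ℕ} (hC : ∀ i, ‖y i‖ ≤ (p : ℝ) ^ C)
    (h : qq ∈ solutions y v) (hk : pHeight p qq = ((p : ℝ) ^ k)⁻¹) :
    ∃ r : ℤ × (Fin n → ℤ), (p : ℤ) ^ C • qq = (p : ℤ) ^ k • r := by
  refine exists_eq_smul_of_dvd ?_ fun i => (pow_dvd_of_pHeight_le hk.le i).mul_left _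
  have hpC : (0 : ℝ) < (p : ℝ) ^ C := pow_pos (mod_cast hp.out.pos) C
  rw [Prod.smul_fst, smul_eq_mul, ← Padic.norm_int_le_pow_iff_dvd, zpow_neg, zpow_natCast,
    Int.cast_mul, norm_mul, norm_intCast_p_pow, ← hk]
  calc ((p : ℝ) ^ C)⁻¹ * ‖(qq.1 : ℚ_[p])‖
      ≤ ((p : ℝ) ^ C)⁻¹ * ((p : ℝ) ^ C * pHeight p qq) := by
        gcongr
        exact norm_fst_le_of_mem_solutions hv hC h
    _ = pHeight p qq := by field_simp

lemma exists_reduction (hv : 1 ≤ v) {C : ℕ} (hC : ∀ i, ‖y i‖ ≤ (p : ℝ) ^ C) {M : ℝ}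
    (h : qq ∈ solutions y v) (hM : pHeight p qq * height qq ≤ M) :
    ∃ r : ℤ × (Fin n → ℤ), r.2 ≠ 0 ∧ height r ≤ (p : ℝ) ^ C * M ∧
      ‖linForm y r‖ < height qq ^ (-(v - 1)) := by
  have hq := snd_ne_zero_of_mem_solutions hv h
  obtain ⟨k, hk⟩ := exists_pHeight_eq_inv_pow (p := p) hq
  obtain ⟨r, hr⟩ := exists_pow_smul_eq_pow_smul hv hC h hk
  have hp0 : (0 : ℝ) < p := mod_cast hp.out.pos
  have hpk : (0 : ℝ) < (p : ℝ) ^ k := pow_pos hp0 k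
  have hpC : (0 : ℝ) < (p : ℝ) ^ C := pow_pos hp0 C
  have hkH : (p : ℝ) ^ k ≤ height qq := by
    have := one_le_pHeight_mul_height (p := p) hq
    rwa [hk, inv_mul_eq_div, one_le_div hpk] at this
  have hHM : height qq ≤ (p : ℝ) ^ k * M := by
    rwa [hk, inv_mul_eq_div, div_le_iff₀' hpk] at hM
  have hH : (p : ℝ) ^ C * height qq = (p : ℝ) ^ k * height r := by
    simpa only [height_smul, Int.cast_pow, Int.cast_natCast, abs_pow, Nat.abs_cast]
      using congrArg height hr
  have hL : ((p : ℝ) ^ C)⁻¹ * ‖linForm y qq‖ = ((p : ℝ) ^ k)⁻¹ * ‖linForm y r‖ := by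
    simpa only [linForm_smul, norm_mul, norm_intCast_p_pow] using congrArg (‖linForm y ·‖) hr
  refine ⟨r, fun hr2 => hq ?_, ?_, ?_⟩
  · have h2 := congrArg Prod.snd hr
    rw [Prod.smul_snd, Prod.smul_snd, hr2, smul_zero, smul_eq_zero] at h2
    exact h2.resolve_left (pow_ne_zero _ (mod_cast hp.out.ne_zero))
  · refine le_of_mul_le_mul_left ?_ hpk
    calc (p : ℝ) ^ k * height r = (p : ℝ) ^ C * height qq := hH.symm
      _ ≤ (p : ℝ) ^ C * ((p : ℝ) ^ k * M) := by gcongr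
      _ = (p : ℝ) ^ k * ((p : ℝ) ^ C * M) := by ring
  · have hLr : ‖linForm y r‖ = (p : ℝ) ^ k * (((p : ℝ) ^ C)⁻¹ * ‖linForm y qq‖) := by
      rw [hL]; field_simp
    have hH0 : 0 < height qq := hpk.trans_le hkH
    calc ‖linForm y r‖ ≤ (p : ℝ) ^ k * ‖linForm y qq‖ := by
          rw [hLr]
          gcongr
          exact inv_mul_le_of_le_mul₀ hpC.le (norm_nonneg _)
            (le_mul_of_one_le_left (norm_nonneg _) (one_le_pow₀ (mod_cast hp.out.one_le)))
      _ < height qq * height qq ^ (-v) := mul_lt_mul' hkH h (norm_nonneg _) hH0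
      _ = height qq ^ (-(v - 1)) := by
          rw [show -(v - 1) = 1 + -v by ring, Real.rpow_add hH0, Real.rpow_one]

lemma exists_linForm_eq_zero (hv : 1 < v) (hinf : (solutions y v).Infinite) {M : ℝ}
    (hM : ∀ qq ∈ solutions y v, pHeight p qq * height qq ≤ M) :
    ∃ r : ℤ × (Fin n → ℤ), r.2 ≠ 0 ∧ linForm y r = 0 := by
  by_contra! hne
  obtain ⟨C, hC⟩ := pow_unbounded_of_one_lt (pnormP y) (mod_cast hp.out.one_lt : (1 : ℝ) < p)
  have hyC : ∀ i, ‖y i‖ ≤ (p : ℝ) ^ C := fun i =>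
    (le_ciSup (f := fun i => ‖y i‖) (Set.finite_range _).bddAbove i).trans hC.le
  set R := {r : ℤ × (Fin n → ℤ) | r.2 ≠ 0 ∧ height r ≤ (p : ℝ) ^ C * M}
  have hR : R.Finite := (finite_setOf_height_le _).subset fun r hr => hr.2
  have hev : ∀ᶠ x : ℝ in Filter.atTop, ∀ r ∈ R, x ^ (-(v - 1)) < ‖linForm y r‖ :=
    (Filter.eventually_all_finite hR).2 fun r hr =>
      (tendsto_rpow_neg_atTop (by linarith)).eventually
        (gt_mem_nhds (norm_pos_iff.2 (hne r hr.1)))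
  obtain ⟨B, hB⟩ := Filter.eventually_atTop.1 hev
  refine hinf ((finite_setOf_height_le B).subset fun qq hqq => ?_)
  by_contra hlt
  obtain ⟨r, hr2, hrH, hrL⟩ := exists_reduction hv.le hyC hqq (hM qq hqq)
  exact (hB _ (not_le.1 hlt).le r ⟨hr2, hrH⟩).not_gt hrL

lemma exists_mem_solutions_gt_of_linForm_eq_zero {r : ℤ × (Fin n → ℤ)} (hr2 : r.2 ≠ 0)
    (hr : linForm y r = 0) (M : ℝ) : ∃ qq ∈ solutions y v, M < pHeight p qq * height qq := by
  have hH : 0 < height r := one_pos.trans_le (one_le_height_of_snd_ne_zero hr2)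
  have hPH : 0 < pHeight p r * height r := mul_pos (pHeight_pos hr2) hH
  obtain ⟨N, hN⟩ := exists_nat_gt (M / (pHeight p r * height r))
  set m : ℤ := p * N + 1
  have hm : ‖(m : ℚ_[p])‖ = 1 := Padic.norm_intCast_eq_one_iff.2 ⟨1, -N, by ring⟩
  have hm_abs : |(m : ℝ)| = p * N + 1 := by
    rw [abs_of_pos (by positivity)]; push_cast [m]; ring
  refine ⟨m • r, ?_, ?_⟩
  · show ‖linForm y (m • r)‖ < height (m • r) ^ (-v)
    rw [linForm_smul, hr, mul_zero, norm_zero, height_smul, hm_abs]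
    exact Real.rpow_pos_of_pos (mul_pos (by positivity) hH) _
  · rw [pHeight_smul, hm, one_mul, height_smul, hm_abs, mul_left_comm]
    calc M < N * (pHeight p r * height r) := (div_lt_iff₀ hPH).1 hN
      _ ≤ (p * N + 1) * (pHeight p r * height r) := by
          gcongr
          nlinarith [(Nat.cast_nonneg N : (0 : ℝ) ≤ N), (mod_cast hp.out.one_le : (1 : ℝ) ≤ p)]

end Solutions

end PadicLinearForm

theorem stmt_1 (p : ℕ) [Fact p.Prime] (n : ℕ) (y : Fin n → ℚ_[p]) (v : ℝ) (hv : 1 < v)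
    (S : Set (ℤ × (Fin n → ℤ)))
    (hS : S = {qq | ‖((qq.1 : ℚ_[p]) + ∑ i, (qq.2 i : ℚ_[p]) * y i)‖ <
        (supnorm (Fin.cons (qq.1 : ℚ) (fun i => (qq.2 i : ℚ)))) ^ (-v)})
    (hinf : S.Infinite) :
    (∀ M : ℝ, ∃ qq ∈ S, M < pnorm p (fun i => (qq.2 i : ℚ)) *
        supnorm (Fin.cons (qq.1 : ℚ) (fun i => (qq.2 i : ℚ)))) ∧
    ∀ qq ∈ S, ‖((qq.1 : ℚ_[p]) + ∑ i, (qq.2 i : ℚ_[p]) * y i)‖ <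
      (pnorm p (fun i => (qq.2 i : ℚ)) *
          supnorm (Fin.cons (qq.1 : ℚ) (fun i => (qq.2 i : ℚ)))) ^ (-(v - 1)) *
        (supnorm (Fin.cons (qq.1 : ℚ) (fun i => (qq.2 i : ℚ))))⁻¹ := by
  subst hS
  refine ⟨fun M => ?_, fun qq hqq => PadicLinearForm.norm_linForm_lt_of_mem_solutions hv.le hqq⟩
  by_contra! hbdd
  obtain ⟨r, hr2, hr⟩ := PadicLinearForm.exists_linForm_eq_zero hv hinf hbdd
  obtain ⟨qq, hqq, hM⟩ :=
    PadicLinearForm.exists_mem_solutions_gt_of_linForm_eq_zero (v := v) hr2 hr M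
  exact (hbdd qq hqq).not_gt hM
end

section
/- Let E ⊂ ℝ² be a set such that (i) whenever (x_k, z_k) ∈ E with (|z_k|) bounded and x_k → 0, one has x_k = 0 for all but finitely many k, and (ii) if (0,z) ∈ E then (0,kz) ∈ E for infinitely many k ∈ ℕ. Let a, b > 0, v > a/b, p a prime, and set c = (bv − a)/(v + 1). Then the following are equivalent: (1) there exist (x,z) ∈ E with |z| arbitrarily large such that |x| ≤ |z|^{−v}; (2) there exist arbitrarily large t > 0 such that for some (x,z) ∈ E \ {(0,0)}, max(p^{at}|x|, p^{−bt}|z|) ≤ p^{−ct}. -/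
open scoped BigOperators

theorem stmt_3 (E : Set (ℝ × ℝ))
    (h1 : ∀ x z : ℕ → ℝ, (∀ k, (x k, z k) ∈ E) → (∃ M : ℝ, ∀ k, |z k| ≤ M) →
      Filter.Tendsto x Filter.atTop (nhds 0) → ∀ᶠ k in Filter.atTop, x k = 0)
    (h2 : ∀ z : ℝ, (0, z) ∈ E → {k : ℕ | (0, (k : ℝ) * z) ∈ E}.Infinite)
    (a b v : ℝ) (ha : 0 < a) (hb : 0 < b) (hv : a / b < v)
    (p : ℝ) (hp : 1 < p)
    (c : ℝ) (hc : c = (b * v - a) / (v + 1)) :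
    (∀ M : ℝ, ∃ xz ∈ E, M < |xz.2| ∧ |xz.1| ≤ |xz.2| ^ (-v)) ↔
    (∀ T : ℝ, ∃ t : ℝ, T < t ∧ ∃ xz ∈ E, xz ≠ (0, 0) ∧
      max (p ^ (a * t) * |xz.1|) (p ^ (-(b * t)) * |xz.2|) ≤ p ^ (-(c * t))) := by
  have hp0 : (0:ℝ) < p := lt_trans one_pos hp
  have hv0 : 0 < v := lt_trans (div_pos ha hb) hv
  have hbv : a < b * v := by
    rw [div_lt_iff₀ hb] at hv; linarith [hv]
  have hv1 : (0:ℝ) < v + 1 := by linarith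
  have hc0 : 0 < c := by rw [hc]; exact div_pos (by linarith) hv1
  have hcb : c < b := by
    rw [hc, div_lt_iff₀ hv1]; nlinarith
  have hbc : 0 < b - c := by linarith
  have hcv : c * (v + 1) = b * v - a := by
    rw [hc]; field_simp
  have hkey : (b - c) * v = a + c := by nlinarith [hcv]
  have hac : 0 < a + c := by linarith
  constructor
  · -- (1) → (2)
    intro H T
    obtain ⟨xz, hE, hM, hx⟩ := H (p ^ ((b - c) * T))
    have hz0 : 0 < |xz.2| := lt_trans (Real.rpow_pos_of_pos hp0 _) hM
    set t := Real.logb p |xz.2| / (b - c) with ht_def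
    have htexp : (b - c) * t = Real.logb p |xz.2| := by
      rw [ht_def]; field_simp
    have ht : p ^ ((b - c) * t) = |xz.2| := by
      rw [htexp, Real.rpow_logb hp0 (ne_of_gt hp) hz0]
    refine ⟨t, ?_, xz, hE, ?_, ?_⟩
    · have h1' : Real.logb p (p ^ ((b - c) * T)) < Real.logb p |xz.2| :=
        Real.logb_lt_logb hp (Real.rpow_pos_of_pos hp0 _) hM
      rw [Real.logb_rpow hp0 (ne_of_gt hp)] at h1'
      rw [ht_def, lt_div_iff₀ hbc]
      linarith
    · intro h
      rw [h] at hz0; simp at hz0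
    · apply max_le
      · have h2' : p ^ (a * t) * |xz.1| ≤ p ^ (a * t) * |xz.2| ^ (-v) :=
          mul_le_mul_of_nonneg_left hx (Real.rpow_nonneg (le_of_lt hp0) _)
        refine le_trans h2' (le_of_eq ?_)
        rw [← ht, ← Real.rpow_mul (le_of_lt hp0), ← Real.rpow_add hp0]
        congr 1
        linear_combination (-t) * hkey
      · rw [← ht, ← Real.rpow_add hp0]
        apply le_of_eq
        congr 1
        ring
  · -- (2) → (1)
    intro H M
    have H' : ∀ k : ℕ, ∃ t : ℝ, (k:ℝ) < t ∧ ∃ xz ∈ E, xz ≠ (0, 0) ∧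
        max (p ^ (a * t) * |xz.1|) (p ^ (-(b * t)) * |xz.2|) ≤ p ^ (-(c * t)) :=
      fun k => H (k : ℝ)
    choose t ht xz hmem hne hle using H'
    have hxb : ∀ k, |(xz k).1| ≤ p ^ (-((a + c) * t k)) := by
      intro k
      have h := (max_le_iff.mp (hle k)).1
      have hpk : (0:ℝ) < p ^ (a * t k) := Real.rpow_pos_of_pos hp0 _
      rw [← le_div_iff₀' hpk] at h
      refine le_trans h (le_of_eq ?_)
      rw [← Real.rpow_sub hp0]
      congr 1; ring
    have hzb : ∀ k, |(xz k).2| ≤ p ^ ((b - c) * t k) := by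
      intro k
      have h := (max_le_iff.mp (hle k)).2
      have hpk : (0:ℝ) < p ^ (-(b * t k)) := Real.rpow_pos_of_pos hp0 _
      rw [← le_div_iff₀' hpk] at h
      refine le_trans h (le_of_eq ?_)
      rw [← Real.rpow_sub hp0]
      congr 1; ring
    by_cases hbdd : ∃ M', ∀ k, |(xz k).2| ≤ M'
    · -- bounded second coordinates
      have hg : Filter.Tendsto (fun k : ℕ => p ^ (-((a + c) * (k:ℝ)))) Filter.atTop (nhds 0) := by
        have hlt1 : p ^ (-(a + c)) < 1 :=
          Real.rpow_lt_one_of_one_lt_of_neg hp (by linarith)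
        have := tendsto_pow_atTop_nhds_zero_of_lt_one
          (Real.rpow_nonneg (le_of_lt hp0) (-(a + c))) hlt1
        refine this.congr fun k => ?_
        rw [← Real.rpow_natCast (p ^ (-(a + c))) k, ← Real.rpow_mul (le_of_lt hp0)]
        congr 1; ring
      have htend : Filter.Tendsto (fun k => (xz k).1) Filter.atTop (nhds 0) := by
        apply squeeze_zero_norm _ hg
        intro k
        refine le_trans (hxb k) ?_
        apply Real.rpow_le_rpow_of_exponent_le (le_of_lt hp)
        have := ht k
        nlinarith
      have hev := h1 (fun k => (xz k).1) (fun k => (xz k).2) (fun k => hmem k) hbdd htend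
      obtain ⟨k0, hk0⟩ := Filter.eventually_atTop.mp hev
      have hx0 : (xz k0).1 = 0 := hk0 k0 le_rfl
      have hz0 : (xz k0).2 ≠ 0 := by
        intro h
        exact hne k0 (Prod.ext hx0 h)
      have hmem0 : ((0:ℝ), (xz k0).2) ∈ E := by
        rw [← hx0]; simpa using hmem k0
      have hinf := h2 _ hmem0
      have hzpos : 0 < |(xz k0).2| := abs_pos.mpr hz0
      obtain ⟨n, hnS, hn⟩ := hinf.exists_gt ⌈M / |(xz k0).2|⌉₊
      have hnM : M / |(xz k0).2| < (n:ℝ) :=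
        lt_of_le_of_lt (Nat.le_ceil _) (by exact_mod_cast hn)
      have hn1 : 0 < (n:ℝ) := by
        exact_mod_cast Nat.lt_of_le_of_lt (Nat.zero_le _) hn
      refine ⟨((0:ℝ), (n:ℝ) * (xz k0).2), hnS, ?_, ?_⟩
      · show M < |(n:ℝ) * (xz k0).2|
        rw [abs_mul, Nat.abs_cast, div_lt_iff₀ hzpos] at *
        exact hnM
      · have hpos : 0 < |(n:ℝ) * (xz k0).2| := by
          rw [abs_mul]; exact mul_pos (by rwa [abs_of_nonneg (le_of_lt hn1)]) hzpos
        simpa using le_of_lt (Real.rpow_pos_of_pos hpos (-v))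
    · push_neg at hbdd
      obtain ⟨k, hk⟩ := hbdd (max M 0)
      have hz : 0 < |(xz k).2| := lt_of_le_of_lt (le_max_right _ _) hk
      refine ⟨xz k, hmem k, lt_of_le_of_lt (le_max_left _ _) hk, ?_⟩
      calc |(xz k).1| ≤ p ^ (-((a + c) * t k)) := hxb k
        _ = (p ^ ((b - c) * t k)) ^ (-v) := by
            rw [← Real.rpow_mul (le_of_lt hp0)]
            congr 1
            linear_combination (t k) * hkey
        _ ≤ |(xz k).2| ^ (-v) :=
            Real.rpow_le_rpow_of_nonpos hz (hzb k) (by linarith)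
end

section
/- Let A ∈ M_{(s+1)×(n−s)}(ℚ_p) with rows a₀,…,a_s and R_A = (I | A). Suppose w ∈ ⋀^j ℤ[1/p]^{n+1} satisfies ‖R_A c(w)‖_p · ‖w‖_∞ ≤ 1. Then ‖w‖_p · ‖w‖_∞ ≪ 1 + ‖π_•(w)‖_p · ‖w‖_∞, where the implied constant depends only on A, n, s, j. -/
open scoped BigOperators

/-- Sign of `e_k ∧ e_J` relative to the sorted basis vector `e_{J ∪ {k}}`. -/
def wedgeSign {n : ℕ} (k : Fin (n + 1)) (J : Finset (Fin (n + 1))) : ℤ :=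
  (-1) ^ (J.filter (fun m => m < k)).card

/-- `‖w‖_p` for a `j`-vector `w` with coordinates indexed by subsets of `{0,…,n}`. -/
noncomputable def extPNorm (p : ℕ) {n : ℕ} (w : Finset (Fin (n + 1)) → ℚ) : ℝ :=
  ⨆ I : Finset (Fin (n + 1)), ((padicNorm p (w I) : ℚ) : ℝ)

/-- `‖w‖_∞` for a `j`-vector `w`. -/
noncomputable def extSupNorm {n : ℕ} (w : Finset (Fin (n + 1)) → ℚ) : ℝ :=
  ⨆ I : Finset (Fin (n + 1)), |((w I : ℚ) : ℝ)|

/-- The pairing `⟨(e_i + a_i) ∧ e_J, w⟩ ∈ ℚ_p`, where `a_i` is the `i`-th row of `A`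
placed in the span of `e_{s+1},…,e_n`. -/
noncomputable def pairRA (p n s : ℕ) [Fact p.Prime] (hsn : s ≤ n)
    (A : Matrix (Fin (s + 1)) (Fin (n - s)) ℚ_[p])
    (w : Finset (Fin (n + 1)) → ℚ) (i : Fin (s + 1)) (J : Finset (Fin (n + 1))) : ℚ_[p] :=
  ((wedgeSign (Fin.castLE (by omega) i) J : ℤ) : ℚ_[p]) *
      ((w (insert (Fin.castLE (by omega) i) J) : ℚ) : ℚ_[p]) +
    ∑ k : Fin (n - s), A i k *
      ((wedgeSign (⟨s + 1 + (k : ℕ), by have := k.isLt; omega⟩ : Fin (n + 1)) J : ℤ) : ℚ_[p]) *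
      ((w (insert (⟨s + 1 + (k : ℕ), by have := k.isLt; omega⟩ : Fin (n + 1)) J) : ℚ) : ℚ_[p])

/-- `‖R_A c(w)‖_p = max_{i} max_{J ⊆ {1,…,n}, #J = j-1} |⟨(e_i + a_i) ∧ e_J, w⟩|_p`. -/
noncomputable def RAcNorm (p n s j : ℕ) [Fact p.Prime] (hsn : s ≤ n)
    (A : Matrix (Fin (s + 1)) (Fin (n - s)) ℚ_[p])
    (w : Finset (Fin (n + 1)) → ℚ) : ℝ :=
  ⨆ i : Fin (s + 1), ⨆ J : Finset (Fin (n + 1)),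
    if J.card = j - 1 ∧ (0 : Fin (n + 1)) ∉ J then ‖pairRA p n s hsn A w i J‖ else 0

/-- `‖π_•(w)‖_p`: the `p`-adic norm of the projection of `w` onto the coordinates
indexed by subsets of `{s+1,…,n}`. -/
noncomputable def piDotNorm (p n s : ℕ) (w : Finset (Fin (n + 1)) → ℚ) : ℝ :=
  ⨆ I : Finset (Fin (n + 1)),
    if ∀ m ∈ I, s + 1 ≤ (m : ℕ) then ((padicNorm p (w I) : ℚ) : ℝ) else 0

/-!
Write `N = max (‖R_A c(w)‖_p, ‖π_•(w)‖_p)` and `M = 1 + ∑ |a_{ik}|_p`. For `i ∈ I ∩ {0,…,s}`, the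
pairing of `(e_i + a_i) ∧ e_{I ∖ i}` with `w` is `±w_I` plus an `A`-combination of coordinates
`w_{I'}` with one index fewer in `{0,…,s}`. Induction on `#(I ∩ {0,…,s})`, starting from the
coordinates seen by `π_•`, gives `|w_I|_p ≤ M ^ #(I ∩ {0,…,s}) · N`, so `‖w‖_p ≤ M ^ (n + 1) · N`;
and `N · ‖w‖_∞ ≤ 1 + ‖π_•(w)‖_p · ‖w‖_∞` by hypothesis.
-/

open Finset

lemma norm_wedgeSign {p : ℕ} [Fact p.Prime] {n : ℕ} (k : Fin (n + 1))
    (J : Finset (Fin (n + 1))) : ‖((wedgeSign k J : ℤ) : ℚ_[p])‖ = 1 := by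
  simp [wedgeSign]

def tailIndex {n s : ℕ} (k : Fin (n - s)) : Fin (n + 1) := ⟨s + 1 + k, by omega⟩

def headCount {n : ℕ} (s : ℕ) (I : Finset (Fin (n + 1))) : ℕ :=
  #(I.filter fun m : Fin (n + 1) => (m : ℕ) ≤ s)

lemma headCount_insert_tailIndex {n s : ℕ} (k : Fin (n - s)) (J : Finset (Fin (n + 1))) :
    headCount s (insert (tailIndex k) J) = headCount s J := by
  rw [headCount, filter_insert, if_neg (by simp only [tailIndex]; omega)]
  rfl

lemma headCount_erase {n s : ℕ} {I : Finset (Fin (n + 1))} {i : Fin (n + 1)} (hi : i ∈ I)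
    (his : (i : ℕ) ≤ s) : headCount s (I.erase i) = headCount s I - 1 := by
  rw [headCount, filter_erase, card_erase_of_mem (mem_filter.mpr ⟨hi, his⟩)]
  rfl

lemma headCount_eq_zero {n s : ℕ} {I : Finset (Fin (n + 1))} (h : headCount s I = 0) :
    ∀ m ∈ I, s + 1 ≤ (m : ℕ) := by
  intro m hm
  by_contra hms
  exact (card_pos.mpr ⟨m, mem_filter.mpr ⟨hm, by omega⟩⟩).ne' h

lemma headCount_le {n : ℕ} (s : ℕ) (I : Finset (Fin (n + 1))) : headCount s I ≤ n + 1 :=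
  (card_filter_le _ _).trans ((card_le_univ I).trans_eq (Fintype.card_fin _))

/-- The pairings only involve `J ⊆ {1,…,n}`, so when `0 ∈ I` it is `0` that has to be removed. -/
lemma exists_head_mem_zero_notMem_erase {n s : ℕ} {I : Finset (Fin (n + 1))}
    (h : 0 < headCount s I) : ∃ i ∈ I, (i : ℕ) ≤ s ∧ 0 ∉ I.erase i := by
  by_cases h0 : (0 : Fin (n + 1)) ∈ I
  · exact ⟨0, h0, Nat.zero_le _, notMem_erase _ _⟩
  · obtain ⟨i, hi⟩ := card_pos.mp h
    obtain ⟨hiI, his⟩ := mem_filter.mp hi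
    exact ⟨i, hiI, his, fun h => h0 (mem_of_mem_erase h)⟩

lemma extSupNorm_nonneg {n : ℕ} (w : Finset (Fin (n + 1)) → ℚ) : 0 ≤ extSupNorm w :=
  Real.iSup_nonneg fun _ => abs_nonneg _

lemma piDotNorm_nonneg (p n s : ℕ) (w : Finset (Fin (n + 1)) → ℚ) : 0 ≤ piDotNorm p n s w :=
  Real.iSup_nonneg fun _ => by split_ifs <;> [exact_mod_cast padicNorm.nonneg _; rfl]

section Bounds

variable {p n s j : ℕ} [Fact p.Prime] {hsn : s ≤ n}
  {A : Matrix (Fin (s + 1)) (Fin (n - s)) ℚ_[p]} {w : Finset (Fin (n + 1)) → ℚ}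

lemma norm_coord_le_piDotNorm {I : Finset (Fin (n + 1))} (hI : ∀ m ∈ I, s + 1 ≤ (m : ℕ)) :
    ‖((w I : ℚ) : ℚ_[p])‖ ≤ piDotNorm p n s w := by
  refine le_trans ?_ (le_ciSup (Set.finite_range _).bddAbove I)
  rw [if_pos hI, Padic.eq_padicNorm]

lemma norm_pairRA_le_RAcNorm (i : Fin (s + 1)) {J : Finset (Fin (n + 1))} (hJ : #J = j - 1)
    (h0 : 0 ∉ J) : ‖pairRA p n s hsn A w i J‖ ≤ RAcNorm p n s j hsn A w := by
  refine le_trans ?_ (le_ciSup (Set.finite_range _).bddAbove i)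
  refine le_trans ?_ (le_ciSup (Set.finite_range _).bddAbove J)
  rw [if_pos ⟨hJ, h0⟩]

lemma norm_coord_le_norm_pairRA_add (i : Fin (s + 1)) (J : Finset (Fin (n + 1))) :
    ‖((w (insert (Fin.castLE (by omega) i) J) : ℚ) : ℚ_[p])‖ ≤ ‖pairRA p n s hsn A w i J‖ +
      ∑ k, ‖A i k‖ * ‖((w (insert (tailIndex k) J) : ℚ) : ℚ_[p])‖ := by
  set tail := ∑ k, A i k * ((wedgeSign (tailIndex k) J : ℤ) : ℚ_[p]) *
    ((w (insert (tailIndex k) J) : ℚ) : ℚ_[p])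
  have hsolve : ((wedgeSign (Fin.castLE (by omega) i) J : ℤ) : ℚ_[p]) *
      ((w (insert (Fin.castLE (by omega) i) J) : ℚ) : ℚ_[p]) = pairRA p n s hsn A w i J - tail :=
    (add_sub_cancel_right _ _).symm
  calc ‖((w (insert (Fin.castLE (by omega) i) J) : ℚ) : ℚ_[p])‖
      = ‖pairRA p n s hsn A w i J - tail‖ := by rw [← hsolve, norm_mul, norm_wedgeSign, one_mul]
    _ ≤ ‖pairRA p n s hsn A w i J‖ + ‖tail‖ := norm_sub_le _ _
    _ ≤ _ := by
      gcongr
      refine (norm_sum_le _ _).trans (sum_le_sum fun k _ => le_of_eq ?_)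
      rw [norm_mul, norm_mul, norm_wedgeSign, mul_one]

theorem norm_coord_le_pow_headCount_mul (hzero : ∀ I, #I ≠ j → w I = 0) {M : ℝ}
    (hM : ∀ i, 1 + ∑ k, ‖A i k‖ ≤ M) (I : Finset (Fin (n + 1))) :
    ‖((w I : ℚ) : ℚ_[p])‖ ≤
      M ^ headCount s I * max (RAcNorm p n s j hsn A w) (piDotNorm p n s w) := by
  set N := max (RAcNorm p n s j hsn A w) (piDotNorm p n s w)
  have hM1 : 1 ≤ M := le_trans (le_add_of_nonneg_right (by positivity)) (hM 0)
  have hN : 0 ≤ N := (piDotNorm_nonneg p n s w).trans (le_max_right _ _)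
  induction h : headCount s I generalizing I with
  | zero =>
    rw [pow_zero, one_mul]
    exact (norm_coord_le_piDotNorm (headCount_eq_zero h)).trans (le_max_right _ _)
  | succ t ih =>
    by_cases hI : #I = j
    swap
    · rw [hzero I hI, Rat.cast_zero, norm_zero]
      positivity
    obtain ⟨i, hiI, his, h0⟩ := exists_head_mem_zero_notMem_erase (s := s) (I := I) (by omega)
    set i' : Fin (s + 1) := ⟨i, by omega⟩
    have hJ : #(I.erase i) = j - 1 := by rw [card_erase_of_mem hiI, hI]
    have htail : ∀ k : Fin (n - s), ‖((w (insert (tailIndex k) (I.erase i)) : ℚ) : ℚ_[p])‖ ≤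
        M ^ t * N := fun k =>
      ih _ (by rw [headCount_insert_tailIndex, headCount_erase hiI his, h]; rfl)
    have hrow : ∑ k, ‖A i' k‖ * ‖((w (insert (tailIndex k) (I.erase i)) : ℚ) : ℚ_[p])‖ ≤
        (M - 1) * (M ^ t * N) :=
      calc _ ≤ ∑ k, ‖A i' k‖ * (M ^ t * N) := sum_le_sum fun k _ => by gcongr; exact htail k
        _ ≤ (M - 1) * (M ^ t * N) := by
          rw [← sum_mul]; gcongr; linarith [hM i']
    have hMt : 1 ≤ M ^ t := one_le_pow₀ hM1
    calc ‖((w I : ℚ) : ℚ_[p])‖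
        ≤ ‖pairRA p n s hsn A w i' (I.erase i)‖ +
          ∑ k, ‖A i' k‖ * ‖((w (insert (tailIndex k) (I.erase i)) : ℚ) : ℚ_[p])‖ := by
          have hi' : Fin.castLE (by omega) i' = i := Fin.ext rfl
          have := norm_coord_le_norm_pairRA_add (hsn := hsn) (A := A) (w := w) i' (I.erase i)
          rwa [hi', insert_erase hiI] at this
      _ ≤ N + (M - 1) * (M ^ t * N) :=
          add_le_add ((norm_pairRA_le_RAcNorm i' hJ h0).trans (le_max_left _ _)) hrow
      _ ≤ M ^ (t + 1) * N := by rw [pow_succ]; nlinarith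

end Bounds

theorem stmt_16 (p n s j : ℕ) [Fact p.Prime] (hsn : s ≤ n)
    (A : Matrix (Fin (s + 1)) (Fin (n - s)) ℚ_[p]) :
    ∃ C : ℝ, 0 < C ∧ ∀ w : Finset (Fin (n + 1)) → ℚ,
      (∀ I, ZInvP p (w I)) → (∀ I, I.card ≠ j → w I = 0) →
      RAcNorm p n s j hsn A w * extSupNorm w ≤ 1 →
      extPNorm p w * extSupNorm w ≤ C * (1 + piDotNorm p n s w * extSupNorm w) := by
  set M := 1 + ∑ i, ∑ k, ‖A i k‖
  have hM : ∀ i, 1 + ∑ k, ‖A i k‖ ≤ M := fun i =>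
    add_le_add le_rfl (single_le_sum (f := fun i => ∑ k, ‖A i k‖)
      (fun _ _ => sum_nonneg fun _ _ => norm_nonneg _) (mem_univ i))
  have hM1 : 1 ≤ M := le_trans (le_add_of_nonneg_right (by positivity)) (hM 0)
  refine ⟨M ^ (n + 1), by positivity, fun w _ hzero hRA => ?_⟩
  set R := RAcNorm p n s j hsn A w
  set P := piDotNorm p n s w
  have hcoord : ∀ I, ((padicNorm p (w I) : ℚ) : ℝ) ≤ M ^ (n + 1) * max R P := fun I => by
    rw [← Padic.eq_padicNorm]
    refine (norm_coord_le_pow_headCount_mul (hsn := hsn) hzero hM I).trans ?_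
    gcongr
    · exact (piDotNorm_nonneg p n s w).trans (le_max_right _ _)
    · exact headCount_le s I
  have hmax : max R P * extSupNorm w ≤ 1 + P * extSupNorm w := by
    have := mul_nonneg (piDotNorm_nonneg p n s w) (extSupNorm_nonneg w)
    rw [max_mul_of_nonneg _ _ (extSupNorm_nonneg w)]
    exact max_le (by linarith) (by linarith)
  calc extPNorm p w * extSupNorm w ≤ M ^ (n + 1) * max R P * extSupNorm w :=
        mul_le_mul_of_nonneg_right (ciSup_le hcoord) (extSupNorm_nonneg w)
    _ ≤ M ^ (n + 1) * (1 + P * extSupNorm w) := by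
        rw [mul_assoc]; gcongr
end
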